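/- (Structure of fundamental solutions, continuous part of Proposition 1.) Fix a positive integer N, a complex number z ≠ 0, and t₀ ∈ ℝ. Let V : ℝ → M_{2N}(ℂ) be continuous with V(t) ∈ 𝕄_d for every t ∈ ℝ. If μ : ℝ → M_{2N}(ℂ) is differentiable and satisfies the linear ODE μ′(t) = i ω(z) (Σ₃ μ(t) − μ(t) Σ₃) + V(t) μ(t) for all t ∈ ℝ, and μ(t₀) ∈ 𝕄_d, then μ(t) ∈ 𝕄_d for all t ∈ ℝ. -/

import Mathlib

/-!
The part `P μ` of `μ` outside the diagonal `N × N` blocks solves the same linear equation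
as `μ`: the projection `P` commutes with left and right multiplication by elements of `𝕄_d`,
such as `Σ₃` and `V t`. Since `P μ (t₀) = 0`, uniqueness for linear equations with continuous
coefficients (Grönwall) gives `P μ = 0`, i.e. `μ t ∈ 𝕄_d`.
-/

noncomputable section

open Matrix

/-- `𝕄_d`: the set of `2N×2N` complex matrices (rows/columns indexed by
`Fin 2 × Fin N`) all of whose four `N×N` blocks are diagonal matrices. -/
def MdSet (N : ℕ) : Set (Matrix (Fin 2 × Fin N) (Fin 2 × Fin N) ℂ) :=
  {M | ∀ (j k : Fin 2) (a b : Fin N), a ≠ b → M (j, a) (k, b) = 0}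

/-- `Σ₃ = diag(I_N, −I_N)`. -/
def Sigma3 (N : ℕ) : Matrix (Fin 2 × Fin N) (Fin 2 × Fin N) ℂ :=
  Matrix.diagonal fun x => if x.1 = 0 then 1 else -1

/-- `ω(z) = (1/2)(z − z⁻¹)²`. -/
def omega (z : ℂ) : ℂ := (1 / 2 : ℂ) * (z - z⁻¹) ^ 2

open Set

attribute [local instance] Matrix.normedAddCommGroup Matrix.normedSpace

theorem eq_zero_of_hasDerivAt_clm_apply {E : Type*} [NormedAddCommGroup E] [NormedSpace ℝ E]
    {A : ℝ → E →L[ℝ] E} (hA : Continuous A) {f : ℝ → E} (hf : ∀ t, HasDerivAt f (A t (f t)) t)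
    {t₀ : ℝ} (hf₀ : f t₀ = 0) (t : ℝ) : f t = 0 := by
  set a := min t₀ t - 1
  set b := max t₀ t + 1
  have ht₀ : t₀ ∈ Ioo a b := ⟨by grind, by grind⟩
  have ht : t ∈ Ioo a b := ⟨by grind, by grind⟩
  obtain ⟨C, hC⟩ := isCompact_Icc.exists_bound_of_continuousOn (s := Icc a b) hA.continuousOn
  have hlip : ∀ s ∈ Ioo a b, LipschitzOnWith C.toNNReal (A s) univ := fun s hs =>
    have hAs : ‖A s‖₊ ≤ C.toNNReal :=
      NNReal.coe_le_coe.1 ((hC s (Ioo_subset_Icc_self hs)).trans (Real.le_coe_toNNReal C))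
    ((A s).lipschitz.weaken hAs).lipschitzOnWith
  exact ODE_solution_unique_of_mem_Ioo (g := 0) hlip ht₀ (fun s _ => ⟨hf s, trivial⟩)
    (fun s _ => ⟨by simp, trivial⟩) hf₀ ht

theorem hasDerivAt_matrix_iff {m n α : Type*} [Fintype m] [Fintype n] [NormedAddCommGroup α]
    [NormedSpace ℝ α] {f : ℝ → Matrix m n α} {f' : Matrix m n α} {t : ℝ} :
    HasDerivAt f f' t ↔ ∀ i j, HasDerivAt (fun s => f s i j) (f' i j) t :=
  hasDerivAt_pi.trans (forall_congr' fun _ => hasDerivAt_pi)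

section CommAddMulLeft

variable {n : Type*} [Fintype n]

def commAddMulLeft (c : ℂ) (S V : Matrix n n ℂ) : Matrix n n ℂ →L[ℝ] Matrix n n ℂ :=
  LinearMap.toContinuousLinearMap
    { toFun := fun M => c • (S * M - M * S) + V * M
      map_add' := fun M M' => by
        simp only [Matrix.mul_add, Matrix.add_mul, smul_sub, smul_add]
        abel
      map_smul' := fun r M => by
        simp only [Matrix.mul_smul, Matrix.smul_mul, smul_sub, smul_add, RingHom.id_apply,
          smul_comm r c] }

theorem commAddMulLeft_apply (c : ℂ) (S V M : Matrix n n ℂ) :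
    commAddMulLeft c S V M = c • (S * M - M * S) + V * M := rfl

theorem continuous_commAddMulLeft (c : ℂ) (S : Matrix n n ℂ) {V : ℝ → Matrix n n ℂ}
    (hV : Continuous V) : Continuous fun t => commAddMulLeft c S (V t) :=
  continuous_clm_apply.2 fun _ => continuous_const.add (hV.matrix_mul continuous_const)

end CommAddMulLeft

section OffDiagBlocks

variable {N : ℕ}

def offDiagBlocks (N : ℕ) :
    Matrix (Fin 2 × Fin N) (Fin 2 × Fin N) ℂ →ₗ[ℂ]
      Matrix (Fin 2 × Fin N) (Fin 2 × Fin N) ℂ where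
  toFun M := Matrix.of fun x y => if x.2 = y.2 then 0 else M x y
  map_add' M M' := by ext x y; by_cases h : x.2 = y.2 <;> simp [h]
  map_smul' c M := by ext x y; by_cases h : x.2 = y.2 <;> simp [h]

theorem offDiagBlocks_apply (M : Matrix (Fin 2 × Fin N) (Fin 2 × Fin N) ℂ)
    (x y : Fin 2 × Fin N) :
    offDiagBlocks N M x y = if x.2 = y.2 then 0 else M x y := rfl

theorem offDiagBlocks_eq_zero_iff {M : Matrix (Fin 2 × Fin N) (Fin 2 × Fin N) ℂ} :
    offDiagBlocks N M = 0 ↔ M ∈ MdSet N := by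
  constructor
  · intro h j k a b hab
    simpa [offDiagBlocks_apply, hab] using congr_fun₂ h (j, a) (k, b)
  · intro h
    ext ⟨j, a⟩ ⟨k, b⟩
    by_cases hab : a = b
    · simp [offDiagBlocks_apply, hab]
    · simp [offDiagBlocks_apply, hab, h j k a b hab]

theorem Sigma3_mem_MdSet : Sigma3 N ∈ MdSet N := fun j k a b hab => by
  simp [Sigma3, Matrix.diagonal_apply_ne, hab]

theorem offDiagBlocks_mul_of_mem_left {A : Matrix (Fin 2 × Fin N) (Fin 2 × Fin N) ℂ}
    (hA : A ∈ MdSet N) (M : Matrix (Fin 2 × Fin N) (Fin 2 × Fin N) ℂ) :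
    offDiagBlocks N (A * M) = A * offDiagBlocks N M := by
  ext x y
  have hA' (w : Fin 2 × Fin N) (hw : x.2 ≠ w.2) : A x w = 0 := hA x.1 w.1 x.2 w.2 hw
  simp only [offDiagBlocks_apply, Matrix.mul_apply]
  split_ifs with hxy
  · refine (Finset.sum_eq_zero fun w _ => ?_).symm
    by_cases hw : w.2 = y.2
    · simp [hw]
    · simp [hw, hA' w (hxy ▸ Ne.symm hw)]
  · refine Finset.sum_congr rfl fun w _ => ?_
    by_cases hw : w.2 = y.2
    · simp [hw, hA' w (hw ▸ hxy)]
    · simp [hw]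

theorem offDiagBlocks_mul_of_mem_right {A : Matrix (Fin 2 × Fin N) (Fin 2 × Fin N) ℂ}
    (hA : A ∈ MdSet N) (M : Matrix (Fin 2 × Fin N) (Fin 2 × Fin N) ℂ) :
    offDiagBlocks N (M * A) = offDiagBlocks N M * A := by
  ext x y
  have hA' (w : Fin 2 × Fin N) (hw : w.2 ≠ y.2) : A w y = 0 := hA w.1 y.1 w.2 y.2 hw
  simp only [offDiagBlocks_apply, Matrix.mul_apply]
  split_ifs with hxy
  · refine (Finset.sum_eq_zero fun w _ => ?_).symm
    by_cases hw : x.2 = w.2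
    · simp [hw]
    · simp [hw, hA' w (hxy ▸ Ne.symm hw)]
  · refine Finset.sum_congr rfl fun w _ => ?_
    by_cases hw : x.2 = w.2
    · simp [hw, hA' w (hw ▸ hxy)]
    · simp [hw]

theorem offDiagBlocks_commAddMulLeft (c : ℂ) {S V : Matrix (Fin 2 × Fin N) (Fin 2 × Fin N) ℂ}
    (hS : S ∈ MdSet N) (hV : V ∈ MdSet N) (M : Matrix (Fin 2 × Fin N) (Fin 2 × Fin N) ℂ) :
    offDiagBlocks N (commAddMulLeft c S V M) = commAddMulLeft c S V (offDiagBlocks N M) := by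
  simp only [commAddMulLeft_apply, map_add, map_smul, map_sub, offDiagBlocks_mul_of_mem_left hS,
    offDiagBlocks_mul_of_mem_right hS, offDiagBlocks_mul_of_mem_left hV]

theorem hasDerivAt_offDiagBlocks {μ : ℝ → Matrix (Fin 2 × Fin N) (Fin 2 × Fin N) ℂ}
    {μ' : Matrix (Fin 2 × Fin N) (Fin 2 × Fin N) ℂ} {t : ℝ} (h : HasDerivAt μ μ' t) :
    HasDerivAt (fun s => offDiagBlocks N (μ s)) (offDiagBlocks N μ') t :=
  ((offDiagBlocks N).toContinuousLinearMap.restrictScalars ℝ).hasFDerivAt.comp_hasDerivAt t h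

end OffDiagBlocks

theorem stmt3_general (N : ℕ) (z : ℂ) (t₀ : ℝ)
    (V : ℝ → Matrix (Fin 2 × Fin N) (Fin 2 × Fin N) ℂ)
    (hVcont : ∀ x y, Continuous fun t => V t x y)
    (hV : ∀ t, V t ∈ MdSet N)
    (μ : ℝ → Matrix (Fin 2 × Fin N) (Fin 2 × Fin N) ℂ)
    (hμ : ∀ (t : ℝ) (x y : Fin 2 × Fin N),
      HasDerivAt (fun s => μ s x y)
        (((Complex.I * omega z) • (Sigma3 N * μ t - μ t * Sigma3 N)
          + V t * μ t) x y) t)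
    (hinit : μ t₀ ∈ MdSet N) :
    ∀ t, μ t ∈ MdSet N := by
  set L := fun t => commAddMulLeft (Complex.I * omega z) (Sigma3 N) (V t)
  have hL : Continuous L :=
    continuous_commAddMulLeft _ _ (continuous_pi fun x => continuous_pi (hVcont x))
  have hμ' (t : ℝ) : HasDerivAt μ (L t (μ t)) t := hasDerivAt_matrix_iff.2 (hμ t)
  have hν (t : ℝ) :
      HasDerivAt (fun s => offDiagBlocks N (μ s)) (L t (offDiagBlocks N (μ t))) t := by
    rw [← offDiagBlocks_commAddMulLeft _ Sigma3_mem_MdSet (hV t)]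
    exact hasDerivAt_offDiagBlocks (hμ' t)
  intro t
  rw [← offDiagBlocks_eq_zero_iff] at hinit ⊢
  exact eq_zero_of_hasDerivAt_clm_apply hL hν hinit t

/-- Continuous part of Proposition 1: if `V` is continuous and `𝕄_d`-valued, `μ`
solves the linear ODE `μ′(t) = i ω(z) (Σ₃ μ − μ Σ₃) + V(t) μ(t)` (entrywise), and
`μ(t₀) ∈ 𝕄_d`, then `μ(t) ∈ 𝕄_d` for all `t`. -/
theorem stmt3 (N : ℕ) (hN : 0 < N) (z : ℂ) (hz : z ≠ 0) (t₀ : ℝ)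
    (V : ℝ → Matrix (Fin 2 × Fin N) (Fin 2 × Fin N) ℂ)
    (hVcont : ∀ x y, Continuous fun t => V t x y)
    (hV : ∀ t, V t ∈ MdSet N)
    (μ : ℝ → Matrix (Fin 2 × Fin N) (Fin 2 × Fin N) ℂ)
    (hμ : ∀ (t : ℝ) (x y : Fin 2 × Fin N),
      HasDerivAt (fun s => μ s x y)
        (((Complex.I * omega z) • (Sigma3 N * μ t - μ t * Sigma3 N)
          + V t * μ t) x y) t)
    (hinit : μ t₀ ∈ MdSet N) :
    ∀ t, μ t ∈ MdSet N :=
  stmt3_general N z t₀ V hVcont hV μ hμ hinit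

end
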